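/- arXiv:2010.11497 — 3 statements merged into one kernel-verified Lean document; each statement's English description precedes it below -/
import Mathlib

section
/- Let h : I → {1,...,b} and let P₁, P₂ be finite nonempty subsets of I. Let C = |P₁ ∪ P₂| and κ = C − |h(P₁ ∪ P₂)| (the number of collisions). Then |P₁ ∩ P₂| − κ ≤ |h(P₁) ∩ h(P₂)| ≤ |P₁ ∩ P₂| + κ. -/
lemma key_sub {I : Type*} [DecidableEq I] (h : I → ℕ) (A S : Finset I) (hAS : A ⊆ S) :
    (S.image h).card + A.card ≤ (A.image h).card + S.card := by
  have h1 : S = A ∪ (S \ A) := by rw [Finset.union_sdiff_of_subset hAS]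
  have h2 : S.image h = A.image h ∪ (S \ A).image h := by
    conv_lhs => rw [h1]
    exact Finset.image_union _ _
  have h3 : (S.image h).card ≤ (A.image h).card + ((S \ A).image h).card := by
    rw [h2]; exact Finset.card_union_le _ _
  have h4 : ((S \ A).image h).card ≤ (S \ A).card := Finset.card_image_le
  have h6 : A.card ≤ S.card := Finset.card_le_card hAS
  have h5 : (S \ A).card = S.card - A.card := Finset.card_sdiff_of_subset hAS
  omega

/-- |P₁∩P₂| − κ ≤ |h(P₁) ∩ h(P₂)| ≤ |P₁∩P₂| + κ,
where κ = |P₁∪P₂| − |h(P₁∪P₂)|. -/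
theorem stmt2 {I : Type*} [DecidableEq I] (b : ℕ) (hb : 0 < b)
    (h : I → ℕ) (hrange : ∀ i, h i ∈ Finset.Icc 1 b)
    (P₁ P₂ : Finset I) (h₁ : P₁.Nonempty) (h₂ : P₂.Nonempty) :
    ((P₁ ∩ P₂).card : ℤ) - (((P₁ ∪ P₂).card : ℤ) - (((P₁ ∪ P₂).image h).card : ℤ))
      ≤ ((P₁.image h ∩ P₂.image h).card : ℤ) ∧
    ((P₁.image h ∩ P₂.image h).card : ℤ)
      ≤ ((P₁ ∩ P₂).card : ℤ) + (((P₁ ∪ P₂).card : ℤ) - (((P₁ ∪ P₂).image h).card : ℤ)) := by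
  have hu : (P₁ ∪ P₂).image h = P₁.image h ∪ P₂.image h := Finset.image_union _ _
  have hc1 : (P₁ ∩ P₂).card + (P₁ ∪ P₂).card = P₁.card + P₂.card :=
    Finset.card_inter_add_card_union _ _
  have hc2 : (P₁.image h ∩ P₂.image h).card + (P₁.image h ∪ P₂.image h).card
      = (P₁.image h).card + (P₂.image h).card := Finset.card_inter_add_card_union _ _
  have k1 := key_sub h P₁ (P₁ ∪ P₂) Finset.subset_union_left
  have k2 := key_sub h P₂ (P₁ ∪ P₂) Finset.subset_union_right
  have i1 : (P₁.image h).card ≤ P₁.card := Finset.card_image_le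
  have i2 : (P₂.image h).card ≤ P₂.card := Finset.card_image_le
  rw [hu] at *
  omega
end

section
/- Let h : I → {1,...,b} be a function and P₁, P₂ finite nonempty subsets of I with C = |P₁∪P₂|, κ = C − |h(P₁∪P₂)|, and Jaccard similarity J = |P₁∩P₂|/C. If p := |h(P₁)∩h(P₂)| / |h(P₁∪P₂)|, then J − κ/C ≤ p. If moreover κ ≤ C/2, then p ≤ J + 3(κ/C) + 2(κ/C)². -/
/-!
Write `C = |P₁ ∪ P₂|`, `D = |h(P₁ ∪ P₂)|`, `a = |P₁ ∩ P₂|`, `m = |h(P₁) ∩ h(P₂)|`,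
so `κ = C - D`. Inclusion–exclusion on both sides gives `m - a = κ - κ₁ - κ₂`, where
`κᵢ = |Pᵢ| - |h(Pᵢ)|`.
The collision count is monotone under inclusion, so `0 ≤ κᵢ ≤ κ` and hence `|m - a| ≤ κ`.
The lower bound then follows from `D ≤ C`. For the upper bound, `m / D ≤ (J + x) / (1 - x)`
with `x = κ / C`, and `(J + x) / (1 - x) ≤ J + 3x + 2x²` because `J ≤ 1` and `x ≤ 1/2`.
-/

open Finset

namespace Finset

variable {α β : Type*} [DecidableEq α] [DecidableEq β]

theorem card_add_card_image_le_of_subset (f : α → β) {s t : Finset α} (hst : s ⊆ t) :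
    s.card + (t.image f).card ≤ (s.image f).card + t.card := by
  have hsplit : t.image f = s.image f ∪ (t \ s).image f := by
    rw [← image_union, union_sdiff_of_subset hst]
  have hcard : (t.image f).card ≤ (s.image f).card + (t \ s).card :=
    hsplit ▸ (card_union_le _ _).trans (Nat.add_le_add_left card_image_le _)
  have := card_sdiff_add_card_eq_card hst
  omega

theorem card_inter_add_card_image_union_le (f : α → β) (s t : Finset α) :
    (s ∩ t).card + ((s ∪ t).image f).card ≤
      (s.image f ∩ t.image f).card + (s ∪ t).card := by
  have hs := card_add_card_image_le_of_subset f (subset_union_left : s ⊆ s ∪ t)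
  have ht := card_add_card_image_le_of_subset f (subset_union_right : t ⊆ s ∪ t)
  have hdom := card_inter_add_card_union s t
  have himg := card_inter_add_card_union (s.image f) (t.image f)
  rw [← image_union] at himg
  omega

theorem card_image_inter_add_card_image_union_le (f : α → β) (s t : Finset α) :
    (s.image f ∩ t.image f).card + ((s ∪ t).image f).card ≤
      (s ∩ t).card + (s ∪ t).card := by
  rw [image_union, card_inter_add_card_union, card_inter_add_card_union]
  exact Nat.add_le_add card_image_le card_image_le

end Finset

theorem sub_div_le_div_of_le_add {a κ m C D : ℝ} (hD : 0 < D) (hDC : D ≤ C) (hm : 0 ≤ m)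
    (ham : a ≤ m + κ) : a / C - κ / C ≤ m / D :=
  calc a / C - κ / C = (a - κ) / C := by ring
    _ ≤ m / C := by gcongr; exacts [hD.le.trans hDC, by linarith]
    _ ≤ m / D := div_le_div_of_nonneg_left hm hD hDC

theorem add_div_one_sub_le {j x : ℝ} (hj : j ≤ 1) (hx₀ : 0 ≤ x) (hx : x ≤ 1 / 2) :
    (j + x) / (1 - x) ≤ j + 3 * x + 2 * x ^ 2 := by
  have hfactor : 0 ≤ x * (2 - x - j - 2 * x ^ 2) := mul_nonneg hx₀ (by nlinarith)
  rw [div_le_iff₀ (by linarith)]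
  nlinarith

theorem div_sub_le_of_le_add {a κ m C : ℝ} (hC : 0 < C) (ha : a ≤ C) (hκ₀ : 0 ≤ κ)
    (hκ : κ ≤ C / 2) (hm : m ≤ a + κ) :
    m / (C - κ) ≤ a / C + 3 * (κ / C) + 2 * (κ / C) ^ 2 :=
  calc m / (C - κ) ≤ (a + κ) / (C - κ) := by gcongr; linarith
    _ = (a / C + κ / C) / (1 - κ / C) := by
        field_simp
    _ ≤ _ := add_div_one_sub_le (div_le_one_of_le₀ ha hC.le) (by positivity)
        (by rw [div_le_iff₀ hC]; linarith)

theorem stmt7_general {I : Type*} [DecidableEq I]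
    (h : I → ℕ) (P₁ P₂ : Finset I) (h₁ : P₁.Nonempty) :
    let C : ℝ := ((P₁ ∪ P₂).card : ℝ)
    let κ : ℝ := C - (((P₁ ∪ P₂).image h).card : ℝ)
    let J : ℝ := ((P₁ ∩ P₂).card : ℝ) / C
    let p : ℝ := ((P₁.image h ∩ P₂.image h).card : ℝ) / (((P₁ ∪ P₂).image h).card : ℝ)
    J - κ / C ≤ p ∧ (κ ≤ C / 2 → p ≤ J + 3 * (κ / C) + 2 * (κ / C) ^ 2) := by
  intro C κ J p
  have hC : C = ((P₁ ∪ P₂).card : ℝ) := rfl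
  have hκ : κ = C - ((P₁ ∪ P₂).image h).card := rfl
  have hD : (0 : ℝ) < ((P₁ ∪ P₂).image h).card := by
    exact_mod_cast ((h₁.mono subset_union_left).image h).card_pos
  have hDC : (((P₁ ∪ P₂).image h).card : ℝ) ≤ C := by
    rw [hC]; exact_mod_cast card_image_le
  have hlow : ((P₁ ∩ P₂).card : ℝ) ≤ (P₁.image h ∩ P₂.image h).card + κ := by
    have : ((P₁ ∩ P₂).card : ℝ) + ((P₁ ∪ P₂).image h).card
        ≤ (P₁.image h ∩ P₂.image h).card + C := by
      rw [hC]; exact_mod_cast card_inter_add_card_image_union_le h P₁ P₂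
    linarith
  have hup : ((P₁.image h ∩ P₂.image h).card : ℝ) ≤ (P₁ ∩ P₂).card + κ := by
    have : ((P₁.image h ∩ P₂.image h).card : ℝ) + ((P₁ ∪ P₂).image h).card
        ≤ (P₁ ∩ P₂).card + C := by
      rw [hC]; exact_mod_cast card_image_inter_add_card_image_union_le h P₁ P₂
    linarith
  have haC : ((P₁ ∩ P₂).card : ℝ) ≤ C := by
    rw [hC]; exact_mod_cast card_le_card inter_subset_union
  refine ⟨sub_div_le_div_of_le_add hD hDC (by positivity) hlow, fun hκC => ?_⟩
  have := div_sub_le_of_le_add (hD.trans_le hDC) haC (by linarith) hκC hup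
  rwa [hκ, sub_sub_cancel] at this

/-- J − κ/C ≤ p, and if κ ≤ C/2 then p ≤ J + 3(κ/C) + 2(κ/C)². -/
theorem stmt7 {I : Type*} [DecidableEq I] (b : ℕ) (hb : 0 < b)
    (h : I → ℕ) (hrange : ∀ i, h i ∈ Finset.Icc 1 b)
    (P₁ P₂ : Finset I) (h₁ : P₁.Nonempty) (h₂ : P₂.Nonempty) :
    let C : ℝ := ((P₁ ∪ P₂).card : ℝ)
    let κ : ℝ := C - (((P₁ ∪ P₂).image h).card : ℝ)
    let J : ℝ := ((P₁ ∩ P₂).card : ℝ) / C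
    let p : ℝ := ((P₁.image h ∩ P₂.image h).card : ℝ) / (((P₁ ∪ P₂).image h).card : ℝ)
    J - κ / C ≤ p ∧ (κ ≤ C / 2 → p ≤ J + 3 * (κ / C) + 2 * (κ / C) ^ 2) :=
  stmt7_general h P₁ P₂ h₁
end

section
/- Let h be a uniformly random function from a finite set S with |S| = C ≥ 2 into {1,...,b}, κ = C − |h(S)| the number of collisions, and d > 0 a real number. Then P[κ ≥ (1+d)·C(C−1)/(2b)] ≤ (e^d/(1+d)^{1+d})^{C(C−1)/(2b)}. -/
open Finset

set_option maxHeartbeats 1000000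

lemma image_cons' {C b : ℕ} (v : Fin b) (h' : Fin C → Fin b) :
    (Finset.univ.image (Fin.cons v h' : Fin (C+1) → Fin b)) = insert v (Finset.univ.image h') := by
  ext x; simp [Finset.mem_image, Fin.exists_fin_succ, eq_comm]

lemma mgf_bound (b : ℕ) (t : ℝ) (ht : 0 ≤ t) (C : ℕ) :
    ∑ h : Fin C → Fin b, Real.exp (t * ((C:ℝ) - ((Finset.univ.image h).card : ℝ)))
      ≤ ∏ k ∈ Finset.range C, ((b:ℝ) + (k:ℝ) * (Real.exp t - 1)) := by
  have het : (1:ℝ) ≤ Real.exp t := Real.one_le_exp ht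
  induction C with
  | zero => simp
  | succ C ih =>
    have key : ∀ h' : Fin C → Fin b,
        ∑ v : Fin b, Real.exp (t * (((C:ℝ)+1) - (((Finset.univ.image (Fin.cons v h' : Fin (C+1) → Fin b))).card : ℝ)))
          = Real.exp (t * ((C:ℝ) - ((Finset.univ.image h').card : ℝ)))
            * ((b:ℝ) + ((Finset.univ.image h').card : ℝ) * (Real.exp t - 1)) := by
      intro h'
      set im := Finset.univ.image h' with him
      have hsub : im ⊆ Finset.univ := Finset.subset_univ _
      have hsb : im.card ≤ b := by
        simpa using Finset.card_le_card hsub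
      rw [← Finset.sum_sdiff hsub]
      have h1 : ∀ v ∈ Finset.univ \ im,
          Real.exp (t * (((C:ℝ)+1) - (((Finset.univ.image (Fin.cons v h' : Fin (C+1) → Fin b))).card : ℝ)))
            = Real.exp (t * ((C:ℝ) - (im.card : ℝ))) := by
        intro v hv
        rw [Finset.mem_sdiff] at hv
        rw [image_cons', ← him, Finset.card_insert_of_notMem hv.2]
        push_cast
        ring_nf
      have h2 : ∀ v ∈ im,
          Real.exp (t * (((C:ℝ)+1) - (((Finset.univ.image (Fin.cons v h' : Fin (C+1) → Fin b))).card : ℝ)))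
            = Real.exp (t * ((C:ℝ) - (im.card : ℝ))) * Real.exp t := by
        intro v hv
        rw [image_cons', ← him, Finset.insert_eq_self.mpr hv, ← Real.exp_add]
        ring_nf
      rw [Finset.sum_congr rfl h1, Finset.sum_congr rfl h2, Finset.sum_const, Finset.sum_const,
        Finset.card_sdiff_of_subset hsub, Finset.card_univ, Fintype.card_fin]
      have hc : ((b - im.card : ℕ) : ℝ) = (b:ℝ) - im.card := by
        push_cast [Nat.cast_sub hsb]; ring
      rw [nsmul_eq_mul, nsmul_eq_mul, hc]
      ring
    have hC1 : ((C+1:ℕ):ℝ) = (C:ℝ) + 1 := by push_cast; ring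
    calc ∑ h : Fin (C+1) → Fin b, Real.exp (t * (((C+1:ℕ):ℝ) - ((Finset.univ.image h).card : ℝ)))
        = ∑ p : Fin b × (Fin C → Fin b), Real.exp (t * (((C:ℝ)+1) - ((Finset.univ.image (Fin.cons p.1 p.2 : Fin (C+1) → Fin b)).card : ℝ))) := by
          rw [hC1]
          exact (Fintype.sum_equiv (Fin.consEquiv (fun _ => Fin b))
            (fun p => Real.exp (t * (((C:ℝ)+1) - ((Finset.univ.image (Fin.cons p.1 p.2 : Fin (C+1) → Fin b)).card : ℝ))))
            (fun h => Real.exp (t * (((C:ℝ)+1) - ((Finset.univ.image h).card : ℝ))))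
            (fun p => rfl)).symm
      _ = ∑ v : Fin b, ∑ h' : Fin C → Fin b, Real.exp (t * (((C:ℝ)+1) - ((Finset.univ.image (Fin.cons v h' : Fin (C+1) → Fin b)).card : ℝ))) := Fintype.sum_prod_type _
      _ = ∑ h' : Fin C → Fin b, ∑ v : Fin b, Real.exp (t * (((C:ℝ)+1) - ((Finset.univ.image (Fin.cons v h' : Fin (C+1) → Fin b)).card : ℝ))) := Finset.sum_comm
      _ = ∑ h' : Fin C → Fin b, Real.exp (t * ((C:ℝ) - ((Finset.univ.image h').card : ℝ)))
            * ((b:ℝ) + ((Finset.univ.image h').card : ℝ) * (Real.exp t - 1)) :=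
          Finset.sum_congr rfl (fun h' _ => key h')
      _ ≤ ∑ h' : Fin C → Fin b, Real.exp (t * ((C:ℝ) - ((Finset.univ.image h').card : ℝ)))
            * ((b:ℝ) + (C:ℝ) * (Real.exp t - 1)) := by
          apply Finset.sum_le_sum
          intro h' _
          apply mul_le_mul_of_nonneg_left _ (Real.exp_nonneg _)
          have hsc : ((Finset.univ.image h').card : ℝ) ≤ (C:ℝ) := by
            have := Finset.card_image_le (s := (Finset.univ : Finset (Fin C))) (f := h')
            simp only [Finset.card_univ, Fintype.card_fin] at this
            exact_mod_cast this
          nlinarith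
      _ = ((b:ℝ) + (C:ℝ) * (Real.exp t - 1)) * ∑ h' : Fin C → Fin b, Real.exp (t * ((C:ℝ) - ((Finset.univ.image h').card : ℝ))) := by
          rw [← Finset.sum_mul]; ring
      _ ≤ ((b:ℝ) + (C:ℝ) * (Real.exp t - 1)) * ∏ k ∈ Finset.range C, ((b:ℝ) + (k:ℝ) * (Real.exp t - 1)) := by
          apply mul_le_mul_of_nonneg_left ih
          have : (0:ℝ) ≤ (b:ℝ) := Nat.cast_nonneg b
          have : (0:ℝ) ≤ (C:ℝ) := Nat.cast_nonneg C
          nlinarith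
      _ = ∏ k ∈ Finset.range (C+1), ((b:ℝ) + (k:ℝ) * (Real.exp t - 1)) := by
          rw [Finset.prod_range_succ]; ring

set_option maxHeartbeats 1000000 in
open scoped Classical in
/-- for a uniformly random h : Fin C → Fin b, C ≥ 2, C−1 ≤ b, d > 0,
P[κ ≥ (1+d)·C(C−1)/(2b)] ≤ (e^d/(1+d)^{1+d})^{C(C−1)/(2b)} where κ = C − |h(S)|. -/
theorem stmt12 (C b : ℕ) (hC : 2 ≤ C) (hCb : C - 1 ≤ b) (d : ℝ) (hd : 0 < d) :
    ((Finset.univ.filter (fun h : Fin C → Fin b =>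
        (1 + d) * ((C : ℝ) * ((C : ℝ) - 1) / (2 * (b : ℝ)))
          ≤ (C : ℝ) - ((Finset.univ.image h).card : ℝ))).card : ℝ) / ((b : ℝ) ^ C)
      ≤ (Real.exp d / (1 + d) ^ (1 + d)) ^ ((C : ℝ) * ((C : ℝ) - 1) / (2 * (b : ℝ))) := by
  classical
  have hb1 : 1 ≤ b := le_trans (by omega) hCb
  have hbR : (0:ℝ) < (b:ℝ) := by exact_mod_cast hb1
  have hCR : (2:ℝ) ≤ (C:ℝ) := by exact_mod_cast hC
  set μ : ℝ := (C : ℝ) * ((C : ℝ) - 1) / (2 * (b : ℝ)) with hμ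
  have hμpos : 0 < μ := by
    apply div_pos (by nlinarith) (by nlinarith)
  set t : ℝ := Real.log (1 + d) with htdef
  have h1d : (0:ℝ) < 1 + d := by linarith
  have ht : 0 < t := Real.log_pos (by linarith)
  have het : Real.exp t = 1 + d := Real.exp_log h1d
  set a : ℝ := (1 + d) * μ with ha
  -- Markov step
  have markov : ((Finset.univ.filter (fun h : Fin C → Fin b =>
        a ≤ (C : ℝ) - ((Finset.univ.image h).card : ℝ))).card : ℝ)
      ≤ Real.exp (-(t*a)) * ∑ h : Fin C → Fin b,
          Real.exp (t * ((C:ℝ) - ((Finset.univ.image h).card : ℝ))) := by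
    rw [Finset.mul_sum]
    calc ((Finset.univ.filter (fun h : Fin C → Fin b =>
            a ≤ (C : ℝ) - ((Finset.univ.image h).card : ℝ))).card : ℝ)
        = ∑ h ∈ Finset.univ.filter (fun h : Fin C → Fin b =>
            a ≤ (C : ℝ) - ((Finset.univ.image h).card : ℝ)), (1:ℝ) := by
          rw [Finset.sum_const, nsmul_eq_mul, mul_one]
      _ ≤ ∑ h ∈ Finset.univ.filter (fun h : Fin C → Fin b =>
            a ≤ (C : ℝ) - ((Finset.univ.image h).card : ℝ)),
            Real.exp (-(t*a)) * Real.exp (t * ((C:ℝ) - ((Finset.univ.image h).card : ℝ))) := by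
          apply Finset.sum_le_sum
          intro h hh
          rw [Finset.mem_filter] at hh
          rw [← Real.exp_add]
          have : 0 ≤ -(t*a) + t * ((C:ℝ) - ((Finset.univ.image h).card : ℝ)) := by
            have := hh.2
            nlinarith [ht.le]
          exact Real.one_le_exp this
      _ ≤ ∑ h : Fin C → Fin b,
            Real.exp (-(t*a)) * Real.exp (t * ((C:ℝ) - ((Finset.univ.image h).card : ℝ))) := by
          apply Finset.sum_le_sum_of_subset_of_nonneg (Finset.filter_subset _ _)
          intro h _ _
          positivity
  have prodbd : ∏ k ∈ Finset.range C, ((b:ℝ) + (k:ℝ) * (Real.exp t - 1))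
      ≤ (b:ℝ)^C * Real.exp (μ * d) := by
    have step : ∀ k ∈ Finset.range C,
        (b:ℝ) + (k:ℝ) * (Real.exp t - 1) ≤ (b:ℝ) * Real.exp ((k:ℝ) * d / b) := by
      intro k _
      rw [het]
      have hx : (b:ℝ) * ((k:ℝ) * d / b) = (k:ℝ) * d := by field_simp
      nlinarith [Real.add_one_le_exp ((k:ℝ) * d / b), hx, hbR]
    calc ∏ k ∈ Finset.range C, ((b:ℝ) + (k:ℝ) * (Real.exp t - 1))
        ≤ ∏ k ∈ Finset.range C, ((b:ℝ) * Real.exp ((k:ℝ) * d / b)) := by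
          apply Finset.prod_le_prod
          · intro k _
            have : 0 ≤ (k:ℝ) * (Real.exp t - 1) := by
              have := Real.one_le_exp ht.le
              nlinarith [Nat.cast_nonneg (α := ℝ) k]
            linarith
          · exact step
      _ = (b:ℝ)^C * Real.exp (∑ k ∈ Finset.range C, (k:ℝ) * d / b) := by
          rw [Finset.prod_mul_distrib, Finset.prod_const, Finset.card_range, Real.exp_sum]
      _ = (b:ℝ)^C * Real.exp (μ * d) := by
          congr 1
          congr 1
          rw [← Finset.sum_div, ← Finset.sum_mul]
          have hsum : ∑ k ∈ Finset.range C, (k:ℝ) = (C:ℝ) * ((C:ℝ) - 1) / 2 := by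
            have h2 := Finset.sum_range_id_mul_two C
            have : ((∑ i ∈ Finset.range C, i : ℕ) : ℝ) * 2 = (C:ℝ) * ((C:ℝ) - 1) := by
              rw [← Nat.cast_ofNat, ← Nat.cast_mul, h2]
              push_cast [Nat.cast_sub (by omega : 1 ≤ C)]
              ring
            push_cast at this ⊢
            linarith
          rw [hsum, hμ]
          field_simp
          try ring
  -- combine
  have hbC : (0:ℝ) < (b:ℝ)^C := by positivity
  rw [div_le_iff₀ hbC]
  have main : ((Finset.univ.filter (fun h : Fin C → Fin b =>
        a ≤ (C : ℝ) - ((Finset.univ.image h).card : ℝ))).card : ℝ)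
      ≤ Real.exp (-(t*a)) * ((b:ℝ)^C * Real.exp (μ * d)) := by
    refine markov.trans ?_
    exact mul_le_mul_of_nonneg_left ((mgf_bound b t ht.le C).trans prodbd) (Real.exp_nonneg _)
  have hrhs : Real.exp (-(t*a)) * Real.exp (μ * d)
      = (Real.exp d / (1 + d) ^ (1 + d)) ^ μ := by
    have hbase : (0:ℝ) < Real.exp d / (1 + d) ^ (1 + d) := by positivity
    rw [Real.rpow_def_of_pos hbase, Real.log_div (Real.exp_ne_zero d) (by positivity),
      Real.log_exp, Real.log_rpow h1d, ← Real.exp_add, htdef, ha]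
    congr 1
    ring
  calc ((Finset.univ.filter (fun h : Fin C → Fin b =>
        a ≤ (C : ℝ) - ((Finset.univ.image h).card : ℝ))).card : ℝ)
      ≤ Real.exp (-(t*a)) * ((b:ℝ)^C * Real.exp (μ * d)) := main
    _ = (Real.exp (-(t*a)) * Real.exp (μ * d)) * (b:ℝ)^C := by ring
    _ = (Real.exp d / (1 + d) ^ (1 + d)) ^ μ * (b:ℝ)^C := by rw [hrhs]
end
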